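/- arXiv:1801.02678 — 4 statements merged into one kernel-verified Lean document; each statement's English description precedes it below -/
import Mathlib

section
/- Let N ≥ 1. The number of functions μ from the edge set of the N-dimensional hypercube graph (vertex set 𝔽₂^N, with an edge between two vectors iff they differ in exactly one coordinate) to 𝔽₂ such that for every vector v ∈ 𝔽₂^N and all indices i ≠ j, the values of μ on the four edges of the square v, v+e_i, v+e_i+e_j, v+e_j sum to 1 in 𝔽₂, equals 2^{2^N − 1}. -/
/-!
Label the edge from `u` to `u + eᵢ` by `∑_{k<i} u k`. Across the square spanned by `eᵢ` and `eⱼ`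
the label in direction `i` flips iff `j < i`, and that in direction `j` iff `i < j`, so every
square sums to `1`. The sum of two dashings has even squares, i.e. it is a closed `𝔽₂`-valued
cochain on the cube, and closed cochains are coboundaries `s(u, v) ↦ f u + f v` (induct on `N`,
splitting the cube into two facets), with `f` unique up to a constant. Hence dashings correspond
to potentials `f` with `f 0 = 0`, of which there are `2 ^ (2 ^ N - 1)`.
-/

/-- The `N`-dimensional hypercube graph: vertices are vectors in `𝔽₂^N`, with an edge
between two vectors iff they differ in exactly one coordinate. -/
def hypercube (N : ℕ) : SimpleGraph (Fin N → ZMod 2) where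
  Adj u v := hammingDist u v = 1
  symm := by
    constructor
    intro u v h
    rwa [hammingDist_comm]
  loopless := by
    constructor
    intro u h
    simp [hammingDist_self] at h

open Finset

theorem ZMod.eq_zero_or_eq_one : ∀ a : ZMod 2, a = 0 ∨ a = 1 := by decide

theorem add_single_add_single_self {ι : Type*} [DecidableEq ι] (u : ι → ZMod 2) (i : ι) :
    u + Pi.single i 1 + Pi.single i 1 = u := by
  rw [add_assoc, ← Pi.single_add, show (1 + 1 : ZMod 2) = 0 from rfl, Pi.single_zero, add_zero]

theorem card_subtype_apply_eq_zero {α M : Type*} [Fintype α] [DecidableEq α] [Finite M] [Zero M]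
    (a : α) : Nat.card {f : α → M // f a = 0} = Nat.card M ^ (Nat.card α - 1) := by
  have e : {f : α → M // f a = 0} ≃ {x : M // x = 0} × ({j // j ≠ a} → M) :=
    ((Equiv.funSplitAt a M).subtypeEquiv (q := fun p => p.1 = 0)
      fun f => Iff.rfl).trans (Equiv.prodSubtypeFstEquivSubtypeProd (p := fun x : M => x = 0))
  rw [Nat.card_congr e, Nat.card_prod, Nat.card_unique, one_mul, Nat.card_fun]
  congr 1
  simp

theorem hammingNorm_eq_one_iff {ι : Type*} [Fintype ι] [DecidableEq ι] {w : ι → ZMod 2} :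
    hammingNorm w = 1 ↔ ∃ i, w = Pi.single i 1 := by
  constructor
  · intro h
    obtain ⟨i, hi⟩ := card_eq_one.mp h
    have hsupp (k : ι) : w k ≠ 0 ↔ k = i := by simpa using Finset.ext_iff.mp hi k
    refine ⟨i, funext fun k => ?_⟩
    by_cases hk : k = i
    · subst hk
      rw [Pi.single_eq_same]
      exact (ZMod.eq_zero_or_eq_one _).resolve_left ((hsupp k).mpr rfl)
    · simpa [Pi.single_apply, hk] using mt (hsupp k).mp hk
  · rintro ⟨i, rfl⟩
    rw [hammingNorm, card_eq_one]
    exact ⟨i, by ext k; by_cases hk : k = i <;> simp [hk]⟩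

theorem apply_eq_apply_zero_of_forall_add_single {ι β : Type*} [Fintype ι] [DecidableEq ι]
    (d : (ι → ZMod 2) → β) (h : ∀ u i, d (u + Pi.single i 1) = d u) (u : ι → ZMod 2) :
    d u = d 0 := by
  have hsum (s : Finset ι) : d (∑ i ∈ s, Pi.single i (u i)) = d 0 := by
    induction s using Finset.induction_on with
    | empty => rw [sum_empty]
    | insert a s ha ih =>
      rw [sum_insert ha, add_comm]
      rcases ZMod.eq_zero_or_eq_one (u a) with h0 | h1
      · rw [h0, Pi.single_zero, add_zero, ih]
      · rw [h1, h, ih]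
  simpa only [univ_sum_single] using hsum univ

theorem Fin.cons_add_single_zero {n : ℕ} {α : Type*} [AddMonoid α] (a x : α)
    (t : Fin n → α) :
    (Fin.cons a t : Fin (n + 1) → α) + Pi.single 0 x = Fin.cons (a + x) t := by
  ext k; cases k using Fin.cases <;> simp [Fin.succ_ne_zero]

theorem Fin.cons_add_single_succ {n : ℕ} {α : Type*} [AddMonoid α] (a x : α) (t : Fin n → α)
    (j : Fin n) :
    (Fin.cons a t : Fin (n + 1) → α) + Pi.single j.succ x = Fin.cons a (t + Pi.single j x) := by
  ext k; cases k using Fin.cases <;> simp [Pi.single_apply, (Fin.succ_ne_zero _).symm]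

theorem exists_potential_of_closed {N : ℕ} (ν : (Fin N → ZMod 2) → Fin N → ZMod 2)
    (hsymm : ∀ u i, ν (u + Pi.single i 1) i = ν u i)
    (hclosed : ∀ u i j, i ≠ j →
      ν u i + ν (u + Pi.single i 1) j + ν (u + Pi.single j 1) i + ν u j = 0) :
    ∃ f : (Fin N → ZMod 2) → ZMod 2, ∀ u i, f u + f (u + Pi.single i 1) = ν u i := by
  induction N with
  | zero => exact ⟨0, fun _ i => i.elim0⟩
  | succ N ih =>
    -- a potential `g` on the facet `u 0 = 0`, extended across the direction `0` by `c`
    let c : (Fin N → ZMod 2) → ZMod 2 := fun t => ν (Fin.cons 0 t) 0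
    obtain ⟨g, hg⟩ := ih (fun t j => ν (Fin.cons 0 t) j.succ)
      (fun t j => by simpa [Fin.cons_add_single_succ] using hsymm (Fin.cons 0 t) j.succ)
      (fun t i j hij => by
        simpa [Fin.cons_add_single_succ] using
          hclosed (Fin.cons 0 t) i.succ j.succ (Fin.succ_injective _ |>.ne hij))
    have hzero (a : ZMod 2) (t : Fin N → ZMod 2) : ν (Fin.cons a t) 0 = c t := by
      obtain rfl | rfl := ZMod.eq_zero_or_eq_one a
      · rfl
      · simpa [Fin.cons_add_single_zero] using hsymm (Fin.cons 0 t) 0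
    have hsucc (a : ZMod 2) (t : Fin N → ZMod 2) (j : Fin N) :
        ν (Fin.cons a t) j.succ =
          ν (Fin.cons 0 t) j.succ + a * (c t + c (t + Pi.single j 1)) := by
      obtain rfl | rfl := ZMod.eq_zero_or_eq_one a
      · simp
      · have h := hclosed (Fin.cons 0 t) 0 j.succ (Fin.succ_ne_zero j).symm
        simp only [Fin.cons_add_single_zero, Fin.cons_add_single_succ, zero_add] at h
        grind
    refine ⟨fun u => g (Fin.tail u) + u 0 * c (Fin.tail u), fun u i => ?_⟩
    obtain ⟨a, t, rfl⟩ : ∃ a t, u = Fin.cons a t :=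
      ⟨u 0, Fin.tail u, (Fin.cons_self_tail u).symm⟩
    cases i using Fin.cases with
    | zero =>
      simp only [Fin.cons_add_single_zero, Fin.tail_cons, Fin.cons_zero, hzero]
      grind
    | succ j =>
      simp only [Fin.cons_add_single_succ, Fin.tail_cons, Fin.cons_zero]
      rw [hsucc, ← hg]
      grind

section PrefixSum

variable {ι : Type*} [LinearOrder ι] [LocallyFiniteOrderBot ι]

def prefixSum (i : ι) (u : ι → ZMod 2) : ZMod 2 := ∑ k ∈ Iio i, u k

theorem prefixSum_add_single [DecidableEq ι] (i j : ι) (u : ι → ZMod 2) :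
    prefixSum i (u + Pi.single j 1) = prefixSum i u + if j < i then 1 else 0 := by
  simp [prefixSum, sum_add_distrib, sum_pi_single']

theorem prefixSum_square [DecidableEq ι] {i j : ι} (hij : i ≠ j) (v : ι → ZMod 2) :
    prefixSum i v + prefixSum j (v + Pi.single i 1) + prefixSum i (v + Pi.single j 1)
      + prefixSum j v = 1 := by
  simp only [prefixSum_add_single]
  grind

end PrefixSum

-- On an edge `v = u + eᵢ` only the `i`-th term survives, and `u k * v k = u k` for `k < i`.
def standardDashing {N : ℕ} : Sym2 (Fin N → ZMod 2) → ZMod 2 :=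
  Sym2.lift ⟨fun u v => ∑ i, (u i + v i) * ∑ k ∈ Iio i, u k * v k, fun u v => by
    simp only [add_comm (u _), mul_comm (u _)]⟩

theorem standardDashing_mk_add_single {N : ℕ} (u : Fin N → ZMod 2) (i : Fin N) :
    standardDashing s(u, u + Pi.single i 1) = prefixSum i u := by
  have hdiff (l : Fin N) :
      u l + (u + Pi.single i 1 : Fin N → ZMod 2) l = (Pi.single i 1 : Fin N → ZMod 2) l := by
    rw [Pi.add_apply, ← add_assoc, CharTwo.add_self_eq_zero, zero_add]
  have hidem : ∀ a : ZMod 2, a * a = a := by decide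
  simp only [standardDashing, Sym2.lift_mk, hdiff, Pi.single_apply, ite_mul, one_mul, zero_mul,
    sum_ite_eq', mem_univ, if_true, prefixSum]
  refine sum_congr rfl fun k hk => ?_
  simp [(mem_Iio.mp hk).ne, hidem]

namespace hypercube

variable {N : ℕ}

theorem adj_iff {u v : Fin N → ZMod 2} :
    (hypercube N).Adj u v ↔ ∃ i, v = u + Pi.single i 1 := by
  change hammingDist u v = 1 ↔ _
  simp only [hammingDist_eq_hammingNorm, hammingNorm_eq_one_iff, neg_add_eq_iff_eq_add]

theorem mk_add_single_mem_edgeSet (u : Fin N → ZMod 2) (i : Fin N) :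
    s(u, u + Pi.single i 1) ∈ (hypercube N).edgeSet :=
  adj_iff.mpr ⟨i, rfl⟩

def labelAt (μ : (hypercube N).edgeSet → ZMod 2) (u : Fin N → ZMod 2) (i : Fin N) : ZMod 2 :=
  μ ⟨s(u, u + Pi.single i 1), mk_add_single_mem_edgeSet u i⟩

theorem labelAt_add_single_self (μ : (hypercube N).edgeSet → ZMod 2) (u : Fin N → ZMod 2)
    (i : Fin N) : labelAt μ (u + Pi.single i 1) i = labelAt μ u i := by
  simp only [labelAt, add_single_add_single_self, Sym2.eq_swap]

theorem labeling_ext {μ μ' : (hypercube N).edgeSet → ZMod 2}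
    (h : ∀ u i, labelAt μ u i = labelAt μ' u i) : μ = μ' := by
  funext ⟨e, he⟩
  induction e using Sym2.ind with
  | _ u v =>
    obtain ⟨i, rfl⟩ := adj_iff.mp ((hypercube N).mem_edgeSet.mp he)
    exact h u i

theorem apply_eq_labelAt (μ : (hypercube N).edgeSet → ZMod 2) {e : Sym2 (Fin N → ZMod 2)}
    (he : e ∈ (hypercube N).edgeSet) {u : Fin N → ZMod 2} {i : Fin N}
    (h : e = s(u, u + Pi.single i 1)) : μ ⟨e, he⟩ = labelAt μ u i :=
  congrArg μ (Subtype.ext h)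

def IsDashing (μ : (hypercube N).edgeSet → ZMod 2) : Prop :=
  ∀ (v : Fin N → ZMod 2) (i j : Fin N), i ≠ j →
    ∀ (h1 : s(v, v + Pi.single i 1) ∈ (hypercube N).edgeSet)
      (h2 : s(v + Pi.single i 1, v + Pi.single i 1 + Pi.single j 1) ∈
        (hypercube N).edgeSet)
      (h3 : s(v + Pi.single i 1 + Pi.single j 1, v + Pi.single j 1) ∈
        (hypercube N).edgeSet)
      (h4 : s(v + Pi.single j 1, v) ∈ (hypercube N).edgeSet),
      μ ⟨_, h1⟩ + μ ⟨_, h2⟩ + μ ⟨_, h3⟩ + μ ⟨_, h4⟩ = 1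

theorem isDashing_iff {μ : (hypercube N).edgeSet → ZMod 2} :
    IsDashing μ ↔ ∀ v i j, i ≠ j →
      labelAt μ v i + labelAt μ (v + Pi.single i 1) j + labelAt μ (v + Pi.single j 1) i
        + labelAt μ v j = 1 := by
  refine forall₄_congr fun v i j _ => ?_
  have e3 : s(v + Pi.single i 1 + Pi.single j 1, v + Pi.single j 1) =
      s(v + Pi.single j 1, v + Pi.single j 1 + Pi.single i 1) := by
    rw [add_right_comm, Sym2.eq_swap]
  have e4 : s(v + Pi.single j 1, v) = s(v, v + Pi.single j 1) := Sym2.eq_swap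
  have h3 := e3 ▸ mk_add_single_mem_edgeSet (v + Pi.single j 1) i
  have h4 := e4 ▸ mk_add_single_mem_edgeSet v j
  refine ⟨fun h => ?_, fun h _ _ _ _ => ?_⟩
  · have h' := h (mk_add_single_mem_edgeSet v i) (mk_add_single_mem_edgeSet _ j) h3 h4
    rw [apply_eq_labelAt μ h3 e3, apply_eq_labelAt μ h4 e4] at h'
    exact h'
  · rwa [apply_eq_labelAt μ h3 e3, apply_eq_labelAt μ h4 e4]

def dashingOfPotential (f : (Fin N → ZMod 2) → ZMod 2) : (hypercube N).edgeSet → ZMod 2 :=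
  fun e => standardDashing e.1 + Sym2.lift ⟨fun u v => f u + f v, fun _ _ => add_comm _ _⟩ e.1

theorem labelAt_dashingOfPotential (f : (Fin N → ZMod 2) → ZMod 2) (u : Fin N → ZMod 2)
    (i : Fin N) :
    labelAt (dashingOfPotential f) u i = prefixSum i u + (f u + f (u + Pi.single i 1)) := by
  simp [labelAt, dashingOfPotential, standardDashing_mk_add_single]

theorem isDashing_dashingOfPotential (f : (Fin N → ZMod 2) → ZMod 2) :
    IsDashing (dashingOfPotential f) := by
  refine isDashing_iff.mpr fun v i j hij => ?_
  have := prefixSum_square hij v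
  simp only [labelAt_dashingOfPotential, add_right_comm v (Pi.single i 1)]
  grind

theorem eq_of_dashingOfPotential_eq {f g : (Fin N → ZMod 2) → ZMod 2} (hf : f 0 = 0)
    (hg : g 0 = 0) (h : dashingOfPotential f = dashingOfPotential g) : f = g := by
  have hinv (u : Fin N → ZMod 2) (i : Fin N) : (f + g) (u + Pi.single i 1) = (f + g) u := by
    have := congrArg (labelAt · u i) h
    simp only [labelAt_dashingOfPotential] at this
    simp only [Pi.add_apply]
    grind
  funext u
  have := apply_eq_apply_zero_of_forall_add_single (f + g) hinv u
  simp only [Pi.add_apply, hf, hg, add_zero] at this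
  grind

theorem exists_potential_of_isDashing {μ : (hypercube N).edgeSet → ZMod 2} (hμ : IsDashing μ) :
    ∃ f, f 0 = 0 ∧ dashingOfPotential f = μ := by
  obtain ⟨f, hf⟩ := exists_potential_of_closed (fun u i => labelAt μ u i + prefixSum i u)
    (fun u i => by simp [labelAt_add_single_self, prefixSum_add_single])
    (fun u i j hij => by
      have := isDashing_iff.mp hμ u i j hij
      have := prefixSum_square hij u
      grind)
  refine ⟨f + fun _ => f 0, by simp [CharTwo.add_self_eq_zero], labeling_ext fun u i => ?_⟩
  have := hf u i
  simp only [labelAt_dashingOfPotential, Pi.add_apply]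
  grind

theorem dashingOfPotential_bijective :
    Function.Bijective fun f : {f : (Fin N → ZMod 2) → ZMod 2 // f 0 = 0} =>
      (⟨dashingOfPotential f.1, isDashing_dashingOfPotential f.1⟩ : {μ // IsDashing μ}) := by
  refine ⟨fun f g h => Subtype.ext (eq_of_dashingOfPotential_eq f.2 g.2 (congrArg Subtype.val h)),
    fun μ => ?_⟩
  obtain ⟨f, hf0, hf⟩ := exists_potential_of_isDashing μ.2
  exact ⟨⟨f, hf0⟩, Subtype.ext hf⟩

end hypercube

theorem hypercube_dashing_count_general (N : ℕ) :
    Nat.card {μ : (hypercube N).edgeSet → ZMod 2 //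
      ∀ (v : Fin N → ZMod 2) (i j : Fin N), i ≠ j →
        ∀ (h1 : s(v, v + Pi.single i 1) ∈ (hypercube N).edgeSet)
          (h2 : s(v + Pi.single i 1, v + Pi.single i 1 + Pi.single j 1) ∈
            (hypercube N).edgeSet)
          (h3 : s(v + Pi.single i 1 + Pi.single j 1, v + Pi.single j 1) ∈
            (hypercube N).edgeSet)
          (h4 : s(v + Pi.single j 1, v) ∈ (hypercube N).edgeSet),
          μ ⟨_, h1⟩ + μ ⟨_, h2⟩ + μ ⟨_, h3⟩ + μ ⟨_, h4⟩ = 1} =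
    2 ^ (2 ^ N - 1) := by
  change Nat.card {μ // hypercube.IsDashing μ} = _
  rw [← Nat.card_eq_of_bijective _ hypercube.dashingOfPotential_bijective,
    card_subtype_apply_eq_zero]
  simp

/-- The number of `𝔽₂`-labelings of the edges of the `N`-dimensional hypercube graph
such that the four edges of every square `v, v+eᵢ, v+eᵢ+eⱼ, v+eⱼ` (`i ≠ j`) carry
labels summing to `1` equals `2^(2^N - 1)`. -/
theorem hypercube_dashing_count (N : ℕ) (hN : 1 ≤ N) :
    Nat.card {μ : (hypercube N).edgeSet → ZMod 2 //
      ∀ (v : Fin N → ZMod 2) (i j : Fin N), i ≠ j →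
        ∀ (h1 : s(v, v + Pi.single i 1) ∈ (hypercube N).edgeSet)
          (h2 : s(v + Pi.single i 1, v + Pi.single i 1 + Pi.single j 1) ∈
            (hypercube N).edgeSet)
          (h3 : s(v + Pi.single i 1 + Pi.single j 1, v + Pi.single j 1) ∈
            (hypercube N).edgeSet)
          (h4 : s(v + Pi.single j 1, v) ∈ (hypercube N).edgeSet),
          μ ⟨_, h1⟩ + μ ⟨_, h2⟩ + μ ⟨_, h3⟩ + μ ⟨_, h4⟩ = 1} =
    2 ^ (2 ^ N - 1) :=
  hypercube_dashing_count_general N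
end

section
/- Let N ≥ 4 with N ≡ 4 (mod 8), and let 1 ≤ k ≤ N/2. Then, as an identity in ℚ, C(N,k) = [∏_{i=0}^{k−2} (2^{N−2i−2} − 2^{N/2−i−1} − 2)/(2^{i+1} − 1)] · [1/2^{k−1} + (2^{N−2k} − 2^{N/2−k} − 2)/(2^k − 1)], where the product over an empty index range (k = 1) equals 1. -/
/-- `C(N,k)`: the number of doubly-even `(N,k)` codes, i.e. `k`-dimensional
`𝔽₂`-subspaces of `𝔽₂^N` all of whose elements have Hamming weight divisible by `4`. -/
noncomputable def doublyEvenCount (N k : ℕ) : ℕ :=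
  Nat.card {C : Submodule (ZMod 2) (Fin N → ZMod 2) //
    Module.finrank (ZMod 2) C = k ∧ ∀ v ∈ C, 4 ∣ hammingNorm v}

/-!
Sort the doubly-even codes by whether they contain the all-ones word `1`. Since `N ≡ 4 (mod 8)`,
`1` is doubly even and orthogonal to every even word, so a code `W ∌ 1` of dimension `k` lies in
exactly one code of dimension `k + 1` containing `1`, namely `W ⊔ ⟨1⟩`, while a code `V ∋ 1` of
dimension `k + 1` has `2 ^ k` hyperplanes avoiding `1`.

The doubly-even codes `V ⊃ W` with `dim V = dim W + 1` correspond to the doubly-even words of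
`W^⊥ ∖ W`, `2 ^ dim W` words for each `V`. These words are counted by evaluating the MacWilliams
identity at the fourth roots of unity, where `(1 + i) ^ N = (1 - i) ^ N = -2 ^ (N / 2)`. Double
counting the pairs `W < V` of codes avoiding `1` then gives a recursion for their number whose
solution is the product in the formula; the codes containing `1` give the `1 / 2 ^ (k - 1)` term.
-/

open Finset Module

theorem Submodule.sup_span_singleton_eq_of_finrank_eq {K V : Type*} [Field K] [AddCommGroup V]
    [Module K V] [FiniteDimensional K V] {W U : Submodule K V} {v : V} (hWU : W ≤ U)
    (hvU : v ∈ U) (hvW : v ∉ W) (hU : finrank K U = finrank K W + 1) :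
    W ⊔ Submodule.span K {v} = U :=
  Submodule.eq_of_le_of_finrank_eq (sup_le hWU ((Submodule.span_singleton_le_iff_mem v U).mpr hvU))
    (by rw [Submodule.finrank_sup_span_singleton hvW, hU])

namespace DoublyEven

open scoped Classical

theorem zmod_two_eq_zero_or_one (a : ZMod 2) : a = 0 ∨ a = 1 := by decide +revert

theorem sum_zmod_two {M : Type*} [AddCommMonoid M] (f : ZMod 2 → M) : ∑ a, f a = f 0 + f 1 :=
  Fin.sum_univ_two f

section Hyperplanes

variable {M : Type*} [AddCommGroup M] [Module (ZMod 2) M]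

theorem dual_ker_injective : Function.Injective fun f : Dual (ZMod 2) M => LinearMap.ker f := by
  intro f g h
  ext y
  have hy : f y = 0 ↔ g y = 0 := by
    simp only [← LinearMap.mem_ker]
    exact Iff.of_eq (congrArg (y ∈ ·) h)
  revert hy
  generalize f y = a; generalize g y = b
  decide +revert

variable [Fintype M]

noncomputable instance : Fintype (Submodule (ZMod 2) M) := Fintype.ofFinite _

noncomputable instance : Fintype (Dual (ZMod 2) M) :=
  have := Module.finite_of_finite (ZMod 2) (M := Dual (ZMod 2) M)
  Fintype.ofFinite _

theorem card_eq_two_pow_finrank : Fintype.card M = 2 ^ finrank (ZMod 2) M := by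
  rw [card_eq_pow_finrank (K := ZMod 2), ZMod.card]

theorem card_dual : Fintype.card (Dual (ZMod 2) M) = 2 ^ finrank (ZMod 2) M := by
  rw [card_eq_two_pow_finrank, Subspace.dual_finrank_eq]

theorem exists_ker_eq {H : Submodule (ZMod 2) M}
    (hH : finrank (ZMod 2) H + 1 = finrank (ZMod 2) M) :
    ∃ f : Dual (ZMod 2) M, f ≠ 0 ∧ LinearMap.ker f = H := by
  have hlt : H < ⊤ := lt_top_iff_ne_top.mpr fun h => by
    rw [h, finrank_top] at hH; omega
  obtain ⟨f, hf, hHf⟩ := H.exists_dual_map_eq_bot_of_lt_top hlt inferInstance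
  refine ⟨f, hf, (Submodule.eq_of_le_of_finrank_eq ?_ ?_).symm⟩
  · exact LinearMap.le_ker_iff_map.mpr hHf
  · have := f.finrank_ker_add_one_of_ne_zero hf; omega

theorem card_hyperplanes_filter (P : Submodule (ZMod 2) M → Prop) [DecidablePred P] :
    #{H : Submodule (ZMod 2) M | finrank (ZMod 2) H + 1 = finrank (ZMod 2) M ∧ P H}
      = #{f : Dual (ZMod 2) M | f ≠ 0 ∧ P (LinearMap.ker f)} := by
  rw [← card_image_of_injective _ dual_ker_injective]
  congr 1
  ext H
  simp only [mem_filter, mem_univ, true_and, mem_image]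
  constructor
  · rintro ⟨hH, hP⟩
    obtain ⟨f, hf, rfl⟩ := exists_ker_eq hH
    exact ⟨f, ⟨hf, hP⟩, rfl⟩
  · rintro ⟨f, ⟨hf, hP⟩, rfl⟩
    exact ⟨f.finrank_ker_add_one_of_ne_zero hf, hP⟩

theorem card_hyperplanes :
    #{H : Submodule (ZMod 2) M | finrank (ZMod 2) H + 1 = finrank (ZMod 2) M}
      = 2 ^ finrank (ZMod 2) M - 1 := by
  simpa [filter_ne', card_univ, card_eq_two_pow_finrank, Subspace.dual_finrank_eq] using
    card_hyperplanes_filter (M := M) fun _ => True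

theorem two_mul_card_ker {f : Dual (ZMod 2) M} (hf : f ≠ 0) :
    2 * Fintype.card (LinearMap.ker f) = Fintype.card M := by
  rw [card_eq_two_pow_finrank, card_eq_two_pow_finrank, ← pow_succ',
    f.finrank_ker_add_one_of_ne_zero hf]

theorem card_hyperplanes_not_mem {x : M} (hx : x ≠ 0) :
    #{H : Submodule (ZMod 2) M | finrank (ZMod 2) H + 1 = finrank (ZMod 2) M ∧ x ∉ H}
      = 2 ^ (finrank (ZMod 2) M - 1) := by
  -- the functionals vanishing at `x` form a hyperplane of the dual space
  have hx' : Dual.eval (ZMod 2) M x ≠ 0 := fun h =>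
    hx <| (forall_dual_apply_eq_zero_iff (ZMod 2) x).mp (LinearMap.congr_fun h)
  have hker : Fintype.card (LinearMap.ker (Dual.eval (ZMod 2) M x))
      = #{f : Dual (ZMod 2) M | f x = 0} := by
    rw [Fintype.card_subtype]
    exact congrArg card (filter_congr fun f _ => Iff.rfl)
  have hhalf := two_mul_card_ker hx'
  have hsplit := card_filter_add_card_filter_not (s := univ) fun f : Dual (ZMod 2) M => f x = 0
  rw [card_dual, hker] at hhalf
  rw [card_univ, card_dual] at hsplit
  obtain ⟨k, hk⟩ : ∃ k, finrank (ZMod 2) M = k + 1 :=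
    Nat.exists_eq_succ_of_ne_zero fun h => by rw [h] at hhalf; omega
  rw [card_hyperplanes_filter]
  refine (congrArg card (filter_congr fun (f : Dual (ZMod 2) M) _ =>
    show f ≠ 0 ∧ x ∉ LinearMap.ker f ↔ ¬ f x = 0 from
    ⟨fun h => h.2, fun h => ⟨fun hf => h (by simp [hf]), h⟩⟩)).trans ?_
  rw [hk, pow_succ] at hhalf hsplit
  rw [hk, Nat.add_sub_cancel]
  omega

theorem card_filter_le_eq_card_filter_map (V : Submodule (ZMod 2) M)
    (P : Submodule (ZMod 2) M → Prop) [DecidablePred P] :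
    #{W | W ≤ V ∧ P W} = #{W' : Submodule (ZMod 2) V | P (W'.map V.subtype)} := by
  symm
  refine card_nbij' (·.map V.subtype) (·.comap V.subtype) ?_ ?_ ?_ ?_
  · intro W' hW'
    simp only [coe_filter, mem_univ, true_and, Set.mem_ofPred_eq] at hW' ⊢
    exact ⟨Submodule.map_subtype_le V W', hW'⟩
  · intro W hW
    simp only [coe_filter, mem_univ, true_and, Set.mem_ofPred_eq] at hW ⊢
    rw [Submodule.map_comap_subtype, inf_eq_right.mpr hW.1]
    exact hW.2
  · intro W' _
    exact Submodule.comap_map_eq_of_injective V.injective_subtype W'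
  · intro W hW
    simp only [coe_filter, mem_univ, true_and, Set.mem_ofPred_eq] at hW
    simp only [Submodule.map_comap_subtype, inf_eq_right.mpr hW.1]

theorem card_hyperplanes_le (V : Submodule (ZMod 2) M) :
    #{W | W ≤ V ∧ finrank (ZMod 2) W + 1 = finrank (ZMod 2) V} = 2 ^ finrank (ZMod 2) V - 1 := by
  rw [card_filter_le_eq_card_filter_map]
  simp only [Submodule.finrank_map_subtype_eq]
  exact card_hyperplanes

theorem card_hyperplanes_le_not_mem {V : Submodule (ZMod 2) M} {x : M} (hxV : x ∈ V) (hx : x ≠ 0) :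
    #{W | W ≤ V ∧ finrank (ZMod 2) W + 1 = finrank (ZMod 2) V ∧ x ∉ W}
      = 2 ^ (finrank (ZMod 2) V - 1) := by
  rw [card_filter_le_eq_card_filter_map]
  have hmem (W' : Submodule (ZMod 2) V) : x ∈ W'.map V.subtype ↔ (⟨x, hxV⟩ : V) ∈ W' := by
    simp [Submodule.mem_map, hxV]
  refine (congrArg card (filter_congr fun (W' : Submodule (ZMod 2) V) _ =>
    show finrank (ZMod 2) (W'.map V.subtype) + 1 = finrank (ZMod 2) V ∧ x ∉ W'.map V.subtype ↔
      finrank (ZMod 2) W' + 1 = finrank (ZMod 2) V ∧ (⟨x, hxV⟩ : V) ∉ W' by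
    rw [Submodule.finrank_map_subtype_eq, hmem])).trans ?_
  exact card_hyperplanes_not_mem (by simpa using hx)

end Hyperplanes

variable {ι : Type*} [Fintype ι]

theorem hammingNorm_eq_sum_val (v : ι → ZMod 2) : hammingNorm v = ∑ i, (v i).val := by
  rw [hammingNorm, card_filter]
  exact sum_congr rfl fun i _ => by generalize v i = a; decide +revert

theorem hammingNorm_one : hammingNorm (1 : ι → ZMod 2) = Fintype.card ι := by
  simp [hammingNorm]

theorem eq_one_of_hammingNorm_eq_card {v : ι → ZMod 2} (hv : hammingNorm v = Fintype.card ι) :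
    v = 1 := by
  funext i
  exact (zmod_two_eq_zero_or_one (v i)).resolve_left (card_filter_eq_iff.mp hv i (mem_univ i))

theorem natCast_hammingNorm (v : ι → ZMod 2) : (hammingNorm v : ZMod 2) = ∑ i, v i := by
  simp [hammingNorm_eq_sum_val]

theorem hammingNorm_add_add_two_mul_hammingNorm_mul (v w : ι → ZMod 2) :
    hammingNorm (v + w) + 2 * hammingNorm (v * w) = hammingNorm v + hammingNorm w := by
  simp only [hammingNorm_eq_sum_val, mul_sum, ← sum_add_distrib]
  refine sum_congr rfl fun i _ => ?_
  simp only [Pi.add_apply, Pi.mul_apply]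
  generalize v i = a; generalize w i = b
  decide +revert

theorem dotProduct_eq_hammingNorm_mul (v w : ι → ZMod 2) :
    v ⬝ᵥ w = (hammingNorm (v * w) : ZMod 2) := by
  rw [natCast_hammingNorm]; rfl

theorem dotProduct_eq_zero_iff_four_dvd_hammingNorm_add {v w : ι → ZMod 2}
    (hv : 4 ∣ hammingNorm v) (hw : 4 ∣ hammingNorm w) :
    v ⬝ᵥ w = 0 ↔ 4 ∣ hammingNorm (v + w) := by
  have := hammingNorm_add_add_two_mul_hammingNorm_mul v w
  rw [dotProduct_eq_hammingNorm_mul, ZMod.natCast_eq_zero_iff]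
  omega

noncomputable def sgn : AddChar (ZMod 2) ℂ := AddChar.zmodChar 2 (neg_one_sq (R := ℂ))

@[simp] theorem sgn_one : sgn 1 = -1 := by simp [sgn, AddChar.zmodChar_apply, ZMod.val_one]

theorem sgn_eq_one_iff (a : ZMod 2) : sgn a = 1 ↔ a = 0 := by
  rcases zmod_two_eq_zero_or_one a with rfl | rfl <;> norm_num

theorem sgn_sum {κ : Type*} (s : Finset κ) (f : κ → ZMod 2) :
    sgn (∑ i ∈ s, f i) = ∏ i ∈ s, sgn (f i) := by
  induction s using Finset.induction_on with
  | empty => simp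
  | insert a s ha ih => rw [sum_insert ha, prod_insert ha, AddChar.map_add_eq_mul, ih]

theorem sum_pow_hammingNorm_mul_sgn_dotProduct (c : ℂ) (w : ι → ZMod 2) :
    ∑ v : ι → ZMod 2, c ^ hammingNorm v * sgn (v ⬝ᵥ w)
      = (1 + c) ^ (Fintype.card ι - hammingNorm w) * (1 - c) ^ hammingNorm w := by
  have hcoord (a : ZMod 2) :
      ∑ x : ZMod 2, c ^ x.val * sgn (x * a) = if a ≠ 0 then 1 - c else 1 + c := by
    rcases zmod_two_eq_zero_or_one a with rfl | rfl <;>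
      simp [sum_zmod_two, ZMod.val_one, sub_eq_add_neg, add_comm]
  calc ∑ v : ι → ZMod 2, c ^ hammingNorm v * sgn (v ⬝ᵥ w)
      = ∑ v : ι → ZMod 2, ∏ i, c ^ (v i).val * sgn (v i * w i) := by
        simp only [hammingNorm_eq_sum_val, dotProduct, sgn_sum, prod_pow_eq_pow_sum,
          prod_mul_distrib]
    _ = ∏ i, if w i ≠ 0 then 1 - c else 1 + c := by
        rw [← Fintype.prod_sum fun i (x : ZMod 2) => c ^ x.val * sgn (x * w i)]
        simp only [hcoord]
    _ = _ := by
        rw [prod_ite, prod_const, prod_const, ← hammingNorm, filter_not,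
          card_sdiff_of_subset (subset_univ _), card_univ]
        exact mul_comm _ _

noncomputable def dualCode (W : Submodule (ZMod 2) (ι → ZMod 2)) : Finset (ι → ZMod 2) :=
  {v | ∀ w ∈ W, v ⬝ᵥ w = 0}

theorem mem_dualCode {W : Submodule (ZMod 2) (ι → ZMod 2)} {v : ι → ZMod 2} :
    v ∈ dualCode W ↔ ∀ w ∈ W, v ⬝ᵥ w = 0 := by
  simp [dualCode]

theorem sum_sgn_dotProduct (W : Submodule (ZMod 2) (ι → ZMod 2)) (v : ι → ZMod 2) :
    ∑ w : W, sgn (v ⬝ᵥ (w : ι → ZMod 2))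
      = if v ∈ dualCode W then 2 ^ finrank (ZMod 2) W else 0 := by
  let ψ : AddChar W ℂ := sgn.compAddMonoidHom
    (AddMonoidHom.mk' (fun w : W => v ⬝ᵥ (w : ι → ZMod 2)) fun a b => dotProduct_add v a b)
  have hψ : ψ = 0 ↔ v ∈ dualCode W := by
    simp [AddChar.eq_zero_iff, ψ, sgn_eq_one_iff, dualCode]
  calc ∑ w : W, sgn (v ⬝ᵥ (w : ι → ZMod 2)) = ∑ w, ψ w := rfl
    _ = _ := by simp only [AddChar.sum_eq_ite, hψ, card_eq_two_pow_finrank]; push_cast; rfl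

theorem macWilliams_identity (W : Submodule (ZMod 2) (ι → ZMod 2)) (c : ℂ) :
    2 ^ finrank (ZMod 2) W * ∑ v ∈ dualCode W, c ^ hammingNorm v
      = ∑ w : W, (1 + c) ^ (Fintype.card ι - hammingNorm (w : ι → ZMod 2))
          * (1 - c) ^ hammingNorm (w : ι → ZMod 2) := by
  calc 2 ^ finrank (ZMod 2) W * ∑ v ∈ dualCode W, c ^ hammingNorm v
      = ∑ v, c ^ hammingNorm v * ∑ w : W, sgn (v ⬝ᵥ (w : ι → ZMod 2)) := by
        simp only [sum_sgn_dotProduct, mul_ite, mul_zero]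
        rw [← sum_filter, filter_mem_eq_inter, univ_inter, mul_sum]
        simp only [mul_comm]
    _ = _ := by
        simp only [mul_sum, ← sum_pow_hammingNorm_mul_sgn_dotProduct]
        exact sum_comm

open Complex in
theorem one_add_I_pow_add_neg_one_pow_add_neg_I_pow (m : ℕ) :
    1 + I ^ m + (-1) ^ m + (-I) ^ m = if 4 ∣ m then 4 else 0 := by
  obtain ⟨q, r, hr, rfl⟩ : ∃ q r, r < 4 ∧ m = 4 * q + r := ⟨m / 4, m % 4, by omega, by omega⟩
  have hdvd : 4 ∣ 4 * q + r ↔ r = 0 := by omega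
  simp only [pow_add, pow_mul, I_pow_four, neg_pow (I), hdvd]
  interval_cases r <;> norm_num [pow_succ]

open Complex in
theorem one_add_I_pow_add_one_sub_I_pow {n : ℕ} (hn : n % 8 = 4) :
    (1 + I) ^ n + (1 - I) ^ n = -2 ^ (n / 2 + 1) := by
  obtain ⟨q, rfl⟩ : ∃ q, n = 4 * (2 * q + 1) := ⟨n / 8, by omega⟩
  have h₁ : (1 + I) ^ 4 = -4 := by linear_combination (I ^ 2 + 4 * I + 5) * I_sq
  have h₂ : (1 - I) ^ 4 = -4 := by linear_combination (I ^ 2 - 4 * I + 5) * I_sq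
  rw [pow_mul, pow_mul, h₁, h₂, show 4 * (2 * q + 1) / 2 + 1 = 2 * (2 * q + 1) + 1 by omega,
    Odd.neg_pow ⟨q, rfl⟩, pow_succ (2 : ℂ), pow_mul (2 : ℂ)]
  norm_num
  ring

def IsDoublyEven (C : Submodule (ZMod 2) (ι → ZMod 2)) : Prop :=
  ∀ v ∈ C, 4 ∣ hammingNorm v

noncomputable def doublyEvenDual (W : Submodule (ZMod 2) (ι → ZMod 2)) : Finset (ι → ZMod 2) :=
  {v ∈ dualCode W | 4 ∣ hammingNorm v}

theorem mem_doublyEvenDual {W : Submodule (ZMod 2) (ι → ZMod 2)} {v : ι → ZMod 2} :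
    v ∈ doublyEvenDual W ↔ (∀ w ∈ W, v ⬝ᵥ w = 0) ∧ 4 ∣ hammingNorm v := by
  simp [doublyEvenDual, mem_dualCode]

theorem card_filter_mem (W : Submodule (ZMod 2) (ι → ZMod 2)) :
    #{v | v ∈ W} = 2 ^ finrank (ZMod 2) W := by
  rw [← Fintype.card_subtype, card_eq_two_pow_finrank]

namespace IsDoublyEven

variable {C W : Submodule (ZMod 2) (ι → ZMod 2)}

theorem mono (hC : IsDoublyEven C) (hWC : W ≤ C) : IsDoublyEven W :=
  fun v hv => hC v (hWC hv)

theorem dotProduct_eq_zero (hC : IsDoublyEven C) {v w : ι → ZMod 2} (hv : v ∈ C) (hw : w ∈ C) :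
    v ⬝ᵥ w = 0 :=
  (dotProduct_eq_zero_iff_four_dvd_hammingNorm_add (hC v hv) (hC w hw)).mpr (hC _ (C.add_mem hv hw))

theorem mem_doublyEvenDual (hC : IsDoublyEven C) (hWC : W ≤ C) {v : ι → ZMod 2} (hv : v ∈ C) :
    v ∈ doublyEvenDual W :=
  DoublyEven.mem_doublyEvenDual.mpr ⟨fun _ hw => hC.dotProduct_eq_zero hv (hWC hw), hC v hv⟩

theorem sup_span_singleton (hC : IsDoublyEven C) {v : ι → ZMod 2} (hv : v ∈ doublyEvenDual C) :
    IsDoublyEven (C ⊔ Submodule.span (ZMod 2) {v}) := by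
  rw [DoublyEven.mem_doublyEvenDual] at hv
  intro x hx
  obtain ⟨w, hw, y, hy, rfl⟩ := Submodule.mem_sup.mp hx
  obtain ⟨a, rfl⟩ := Submodule.mem_span_singleton.mp hy
  rcases zmod_two_eq_zero_or_one a with rfl | rfl
  · simpa using hC w hw
  · rw [one_smul, add_comm]
    exact (dotProduct_eq_zero_iff_four_dvd_hammingNorm_add hv.2 (hC w hw)).mp (hv.1 w hw)

theorem one_mem_doublyEvenDual (hn : 4 ∣ Fintype.card ι) (hC : IsDoublyEven C) :
    1 ∈ doublyEvenDual C := by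
  refine DoublyEven.mem_doublyEvenDual.mpr ⟨?_, hammingNorm_one (ι := ι) ▸ hn⟩
  intro w hw
  rw [one_dotProduct, ← natCast_hammingNorm, ZMod.natCast_eq_zero_iff]
  exact dvd_trans (by norm_num) (hC w hw)

end IsDoublyEven

theorem sum_one_add_one_pow_mul (W : Submodule (ZMod 2) (ι → ZMod 2)) :
    ∑ w : W, (1 + 1 : ℂ) ^ (Fintype.card ι - hammingNorm (w : ι → ZMod 2))
      * (1 - 1) ^ hammingNorm (w : ι → ZMod 2) = 2 ^ Fintype.card ι := by
  rw [Fintype.sum_eq_single 0 fun w hw => by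
    simp [zero_pow (hammingNorm_ne_zero_iff.mpr (Subtype.coe_ne_coe.mpr hw))]]
  norm_num

theorem sum_one_add_neg_one_pow_mul (W : Submodule (ZMod 2) (ι → ZMod 2)) :
    ∑ w : W, (1 + -1 : ℂ) ^ (Fintype.card ι - hammingNorm (w : ι → ZMod 2))
      * (1 - -1) ^ hammingNorm (w : ι → ZMod 2) = if 1 ∈ W then 2 ^ Fintype.card ι else 0 := by
  have hterm (v : ι → ZMod 2) (hv : v ≠ 1) :
      (1 + -1 : ℂ) ^ (Fintype.card ι - hammingNorm v) * (1 - -1) ^ hammingNorm v = 0 := by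
    have : hammingNorm v < Fintype.card ι :=
      hammingNorm_le_card_fintype.lt_of_ne (mt eq_one_of_hammingNorm_eq_card hv)
    simp [zero_pow (Nat.sub_ne_zero_of_lt this)]
  split_ifs with h1
  · rw [Fintype.sum_eq_single (⟨1, h1⟩ : W) fun w hw => hterm w fun h => hw (Subtype.ext h)]
    norm_num [hammingNorm_one]
  · exact Fintype.sum_eq_zero _ fun w => hterm w fun hw => h1 (by rw [← hw]; exact w.2)

theorem sum_one_add_pow_mul_of_sq_eq_neg_one {W : Submodule (ZMod 2) (ι → ZMod 2)}
    (hW : IsDoublyEven W) {c : ℂ} (hc : c ^ 2 = -1) :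
    ∑ w : W, (1 + c) ^ (Fintype.card ι - hammingNorm (w : ι → ZMod 2))
      * (1 - c) ^ hammingNorm (w : ι → ZMod 2)
      = 2 ^ finrank (ZMod 2) W * (1 + c) ^ Fintype.card ι := by
  have hfac : 1 - c = (1 + c) * -c := by linear_combination hc
  have hterm (w : W) : (1 + c) ^ (Fintype.card ι - hammingNorm (w : ι → ZMod 2))
      * (1 - c) ^ hammingNorm (w : ι → ZMod 2) = (1 + c) ^ Fintype.card ι := by
    obtain ⟨t, ht⟩ := hW w w.2
    rw [hfac, mul_pow, ← mul_assoc, ← pow_add, Nat.sub_add_cancel hammingNorm_le_card_fintype, ht,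
      pow_mul, show (-c) ^ 4 = 1 by linear_combination (c ^ 2 - 1) * hc, one_pow, mul_one]
  simp only [hterm, sum_const, card_univ, card_eq_two_pow_finrank, nsmul_eq_mul]
  push_cast; rfl

open Complex in
theorem pow_finrank_mul_four_mul_card_doublyEvenDual {W : Submodule (ZMod 2) (ι → ZMod 2)}
    (hW : IsDoublyEven W) :
    2 ^ finrank (ZMod 2) W * (4 * #(doublyEvenDual W) : ℂ)
      = 2 ^ Fintype.card ι * (if 1 ∈ W then 2 else 1)
        + 2 ^ finrank (ZMod 2) W * ((1 + I) ^ Fintype.card ι + (1 - I) ^ Fintype.card ι) := by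
  have hcount : (4 * #(doublyEvenDual W) : ℂ) = ∑ v ∈ dualCode W,
      (1 ^ hammingNorm v + I ^ hammingNorm v + (-1) ^ hammingNorm v + (-I) ^ hammingNorm v) := by
    simp only [one_pow, one_add_I_pow_add_neg_one_pow_add_neg_I_pow, sum_ite, sum_const_zero,
      add_zero, sum_const, nsmul_eq_mul, doublyEvenDual]
    ring
  rw [hcount, sum_add_distrib, sum_add_distrib, sum_add_distrib, mul_add, mul_add, mul_add,
    macWilliams_identity, macWilliams_identity, macWilliams_identity, macWilliams_identity,
    sum_one_add_one_pow_mul, sum_one_add_neg_one_pow_mul,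
    sum_one_add_pow_mul_of_sq_eq_neg_one hW I_sq,
    sum_one_add_pow_mul_of_sq_eq_neg_one hW (c := -I) (by rw [neg_sq, I_sq])]
  split_ifs <;> ring

theorem four_mul_card_doublyEvenDual_add (hn : Fintype.card ι % 8 = 4)
    {W : Submodule (ZMod 2) (ι → ZMod 2)} (hW : IsDoublyEven W) (h1 : 1 ∉ W) :
    4 * #(doublyEvenDual W) + 2 ^ (Fintype.card ι / 2 + 1)
      = 2 ^ (Fintype.card ι - finrank (ZMod 2) W) := by
  have hle : finrank (ZMod 2) W ≤ Fintype.card ι :=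
    (Submodule.finrank_le W).trans_eq (finrank_pi _)
  have hpow : (2 : ℂ) ^ Fintype.card ι
      = 2 ^ finrank (ZMod 2) W * 2 ^ (Fintype.card ι - finrank (ZMod 2) W) := by
    rw [← pow_add, Nat.add_sub_cancel' hle]
  have key := pow_finrank_mul_four_mul_card_doublyEvenDual hW
  rw [if_neg h1, one_add_I_pow_add_one_sub_I_pow hn, hpow] at key
  refine Nat.cast_injective (R := ℂ)
    (mul_left_cancel₀ (pow_ne_zero (finrank (ZMod 2) W) two_ne_zero) ?_)
  push_cast
  linear_combination key

variable (ι) in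
noncomputable def doublyEvenCodes (k : ℕ) : Finset (Submodule (ZMod 2) (ι → ZMod 2)) :=
  {C | finrank (ZMod 2) C = k ∧ IsDoublyEven C}

theorem mem_doublyEvenCodes {k : ℕ} {C : Submodule (ZMod 2) (ι → ZMod 2)} :
    C ∈ doublyEvenCodes ι k ↔ finrank (ZMod 2) C = k ∧ IsDoublyEven C := by
  simp [doublyEvenCodes]

noncomputable def extensions (W : Submodule (ZMod 2) (ι → ZMod 2)) :
    Finset (Submodule (ZMod 2) (ι → ZMod 2)) :=
  {V ∈ doublyEvenCodes ι (finrank (ZMod 2) W + 1) | W ≤ V}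

theorem mem_extensions {W V : Submodule (ZMod 2) (ι → ZMod 2)} :
    V ∈ extensions W ↔ (finrank (ZMod 2) V = finrank (ZMod 2) W + 1 ∧ IsDoublyEven V) ∧ W ≤ V := by
  simp [extensions, doublyEvenCodes]

theorem filter_mem_extensions {W : Submodule (ZMod 2) (ι → ZMod 2)} (hW : IsDoublyEven W)
    {v : ι → ZMod 2} (hv : v ∈ doublyEvenDual W) (hvW : v ∉ W) :
    {V ∈ extensions W | v ∈ V} = {W ⊔ Submodule.span (ZMod 2) {v}} := by
  ext V
  simp only [mem_filter, mem_extensions, mem_singleton]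
  constructor
  · rintro ⟨⟨⟨hV, -⟩, hWV⟩, hvV⟩
    exact (Submodule.sup_span_singleton_eq_of_finrank_eq hWV hvV hvW hV).symm
  · rintro rfl
    exact ⟨⟨⟨Submodule.finrank_sup_span_singleton hvW, hW.sup_span_singleton hv⟩, le_sup_left⟩,
      Submodule.mem_sup_right (Submodule.mem_span_singleton_self v)⟩

theorem card_doublyEvenDual {W : Submodule (ZMod 2) (ι → ZMod 2)} (hW : IsDoublyEven W) :
    #(doublyEvenDual W) = 2 ^ finrank (ZMod 2) W * (1 + #(extensions W)) := by
  have hin : {v ∈ doublyEvenDual W | v ∈ W} = ({v | v ∈ W} : Finset (ι → ZMod 2)) := by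
    ext v
    simp only [mem_filter, mem_univ, true_and, and_iff_right_iff_imp]
    exact hW.mem_doublyEvenDual le_rfl
  have hout : #{v ∈ doublyEvenDual W | v ∉ W} * 1 = #(extensions W) * 2 ^ finrank (ZMod 2) W := by
    refine card_mul_eq_card_mul (· ∈ ·) (fun v hv => ?_) (fun V hV => ?_)
    · rw [mem_filter] at hv
      rw [bipartiteAbove, filter_mem_extensions hW hv.1 hv.2, card_singleton]
    · obtain ⟨⟨hV, hVd⟩, hWV⟩ := mem_extensions.mp hV
      have : bipartiteBelow (· ∈ ·) {v ∈ doublyEvenDual W | v ∉ W} V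
          = ({v | v ∈ V} : Finset (ι → ZMod 2)) \ ({v | v ∈ W} : Finset (ι → ZMod 2)) := by
        ext v
        simp only [mem_bipartiteBelow, mem_filter, mem_sdiff, mem_univ, true_and]
        exact ⟨fun h => ⟨h.2, h.1.2⟩, fun h => ⟨⟨hVd.mem_doublyEvenDual hWV h.1, h.2⟩, h.1⟩⟩
      rw [this, card_sdiff_of_subset fun v => by simpa using @hWV v, card_filter_mem,
        card_filter_mem, hV, pow_succ]
      omega
  rw [← card_filter_add_card_filter_not (s := doublyEvenDual W) (· ∈ W), hin, card_filter_mem,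
    ← mul_one #{v ∈ doublyEvenDual W | v ∉ W}, hout]
  ring

theorem card_extensions (hn : Fintype.card ι % 8 = 4) {W : Submodule (ZMod 2) (ι → ZMod 2)}
    (hW : IsDoublyEven W) (h1 : 1 ∉ W) (hk : finrank (ZMod 2) W + 1 ≤ Fintype.card ι / 2) :
    (#(extensions W) : ℚ) = 2 ^ (Fintype.card ι - 2 * finrank (ZMod 2) W - 2)
      - 2 ^ (Fintype.card ι / 2 - finrank (ZMod 2) W - 1) - 1 := by
  set n := Fintype.card ι
  set m := finrank (ZMod 2) W
  have h := four_mul_card_doublyEvenDual_add hn hW h1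
  rw [card_doublyEvenDual hW, show n - m = (n - 2 * m - 2) + m + 2 by omega,
    show n / 2 + 1 = (n / 2 - m - 1) + m + 2 by omega] at h
  have hq : (4 * (2 ^ m * (1 + #(extensions W))) + 2 ^ (n / 2 - m - 1 + m + 2) : ℚ)
      = 2 ^ (n - 2 * m - 2 + m + 2) := by exact_mod_cast h
  simp only [pow_add] at hq
  apply mul_left_cancel₀ (pow_ne_zero m (two_ne_zero' ℚ))
  linear_combination hq / 4

theorem bipartiteAbove_filter_doublyEvenCodes {W : Submodule (ZMod 2) (ι → ZMod 2)} {k : ℕ}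
    (hW : finrank (ZMod 2) W = k) (p : Submodule (ZMod 2) (ι → ZMod 2) → Prop) [DecidablePred p] :
    bipartiteAbove (· ≤ ·) {V ∈ doublyEvenCodes ι (k + 1) | p V} W = {V ∈ extensions W | p V} := by
  rw [bipartiteAbove, extensions, hW, filter_comm]

theorem card_filter_not_one_mem_doublyEvenCodes [Nonempty ι] (hn : 4 ∣ Fintype.card ι) (k : ℕ) :
    #{W ∈ doublyEvenCodes ι k | 1 ∉ W} = #{V ∈ doublyEvenCodes ι (k + 1) | 1 ∈ V} * 2 ^ k := by
  rw [← mul_one #{W ∈ doublyEvenCodes ι k | 1 ∉ W}]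
  refine card_mul_eq_card_mul (· ≤ ·) (fun W hW => ?_) (fun V hV => ?_)
  · obtain ⟨⟨hWk, hWd⟩, h1⟩ := mem_filter.mp hW |>.imp_left mem_doublyEvenCodes.mp
    rw [bipartiteAbove_filter_doublyEvenCodes hWk,
      filter_mem_extensions hWd (hWd.one_mem_doublyEvenDual hn) h1, card_singleton]
  · obtain ⟨⟨hVk, hVd⟩, h1⟩ := mem_filter.mp hV |>.imp_left mem_doublyEvenCodes.mp
    refine (congrArg card ?_).trans ((card_hyperplanes_le_not_mem h1 one_ne_zero).trans
      (by rw [hVk, Nat.add_sub_cancel]))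
    ext W
    simp only [mem_bipartiteBelow, mem_filter, mem_doublyEvenCodes, mem_univ, true_and, hVk]
    exact ⟨fun ⟨⟨⟨hWk, _⟩, hW1⟩, hWV⟩ => ⟨hWV, by omega, hW1⟩,
      fun ⟨hWV, hWk, hW1⟩ => ⟨⟨⟨by omega, hVd.mono hWV⟩, hW1⟩, hWV⟩⟩

theorem card_filter_not_one_mem_doublyEvenCodes_succ (hn : Fintype.card ι % 8 = 4) {k : ℕ}
    (hk : k + 1 ≤ Fintype.card ι / 2) :
    (#{V ∈ doublyEvenCodes ι (k + 1) | 1 ∉ V} : ℚ) * (2 ^ (k + 1) - 1)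
      = #{W ∈ doublyEvenCodes ι k | 1 ∉ W}
        * (2 ^ (Fintype.card ι - 2 * k - 2) - 2 ^ (Fintype.card ι / 2 - k - 1) - 2) := by
  have habove (W) (hW : W ∈ {W ∈ doublyEvenCodes ι k | 1 ∉ W}) :
      (#(bipartiteAbove (· ≤ ·) {V ∈ doublyEvenCodes ι (k + 1) | 1 ∉ V} W) : ℚ)
        = 2 ^ (Fintype.card ι - 2 * k - 2) - 2 ^ (Fintype.card ι / 2 - k - 1) - 2 := by
    obtain ⟨⟨hWk, hWd⟩, h1⟩ := mem_filter.mp hW |>.imp_left mem_doublyEvenCodes.mp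
    have hsplit := card_filter_add_card_filter_not (s := extensions W) (1 ∈ ·)
    rw [filter_mem_extensions hWd (hWd.one_mem_doublyEvenDual (by omega)) h1, card_singleton]
      at hsplit
    have hcard : #{V ∈ extensions W | 1 ∉ V} = #(extensions W) - 1 := by omega
    rw [bipartiteAbove_filter_doublyEvenCodes hWk, hcard, Nat.cast_sub (by omega),
      card_extensions hn hWd h1 (hWk ▸ hk), hWk]
    push_cast
    ring
  have hbelow (V) (hV : V ∈ {V ∈ doublyEvenCodes ι (k + 1) | 1 ∉ V}) :
      #(bipartiteBelow (· ≤ ·) {W ∈ doublyEvenCodes ι k | 1 ∉ W} V) = 2 ^ (k + 1) - 1 := by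
    obtain ⟨⟨hVk, hVd⟩, h1⟩ := mem_filter.mp hV |>.imp_left mem_doublyEvenCodes.mp
    refine (congrArg card ?_).trans ((card_hyperplanes_le V).trans (by rw [hVk]))
    ext W
    simp only [mem_bipartiteBelow, mem_filter, mem_doublyEvenCodes, mem_univ, true_and, hVk]
    exact ⟨fun ⟨⟨⟨hWk, _⟩, _⟩, hWV⟩ => ⟨hWV, by omega⟩,
      fun ⟨hWV, hWk⟩ => ⟨⟨⟨by omega, hVd.mono hWV⟩, fun h => h1 (hWV h)⟩, hWV⟩⟩
  have hsum := congrArg (Nat.cast (R := ℚ))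
    ((sum_card_bipartiteAbove_eq_sum_card_bipartiteBelow (· ≤ ·)).trans (sum_const_nat hbelow))
  rw [Nat.cast_sum, sum_congr rfl habove, sum_const, nsmul_eq_mul, Nat.cast_mul,
    Nat.cast_sub Nat.one_le_two_pow] at hsum
  push_cast at hsum
  linear_combination -hsum

theorem two_pow_sub_one_ne_zero {k : ℕ} (hk : k ≠ 0) : (2 : ℚ) ^ k - 1 ≠ 0 := by
  have : (2 : ℚ) ≤ 2 ^ k := le_self_pow₀ one_le_two hk
  linarith

theorem filter_not_one_mem_doublyEvenCodes_zero [Nonempty ι] :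
    {C ∈ doublyEvenCodes ι 0 | 1 ∉ C} = {⊥} := by
  ext C
  simp only [mem_filter, mem_doublyEvenCodes, Submodule.finrank_eq_zero, mem_singleton]
  constructor
  · exact fun h => h.1.1
  · rintro rfl
    exact ⟨⟨rfl, fun v hv => by simp [(Submodule.mem_bot _).mp hv]⟩,
      fun h => one_ne_zero ((Submodule.mem_bot _).mp h)⟩

theorem card_filter_not_one_mem_doublyEvenCodes_eq_prod [Nonempty ι]
    (hn : Fintype.card ι % 8 = 4) {k : ℕ} (hk : k ≤ Fintype.card ι / 2) :
    (#{C ∈ doublyEvenCodes ι k | 1 ∉ C} : ℚ) = ∏ i ∈ range k,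
      (2 ^ (Fintype.card ι - 2 * i - 2) - 2 ^ (Fintype.card ι / 2 - i - 1) - 2)
        / (2 ^ (i + 1) - 1) := by
  induction k with
  | zero => simp [filter_not_one_mem_doublyEvenCodes_zero]
  | succ k ih =>
    rw [prod_range_succ, ← ih (by omega), mul_div_assoc',
      eq_div_iff (two_pow_sub_one_ne_zero k.succ_ne_zero)]
    exact card_filter_not_one_mem_doublyEvenCodes_succ hn hk

theorem card_doublyEvenCodes [Nonempty ι] (hn : Fintype.card ι % 8 = 4) {k : ℕ} (hk1 : 1 ≤ k)
    (hk2 : k ≤ Fintype.card ι / 2) :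
    (#(doublyEvenCodes ι k) : ℚ) =
      (∏ i ∈ range (k - 1),
        (2 ^ (Fintype.card ι - 2 * i - 2) - 2 ^ (Fintype.card ι / 2 - i - 1) - 2)
          / (2 ^ (i + 1) - 1)) *
      (1 / 2 ^ (k - 1) + (2 ^ (Fintype.card ι - 2 * k) - 2 ^ (Fintype.card ι / 2 - k) - 2)
        / (2 ^ k - 1)) := by
  obtain ⟨j, rfl⟩ : ∃ j, k = j + 1 := ⟨k - 1, by omega⟩
  have hsplit := card_filter_add_card_filter_not (s := doublyEvenCodes ι (j + 1)) (1 ∈ ·)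
  have hwith := card_filter_not_one_mem_doublyEvenCodes (ι := ι) (by omega) j
  have hwithout := card_filter_not_one_mem_doublyEvenCodes_succ hn hk2
  rw [← hsplit, Nat.add_sub_cancel, ← card_filter_not_one_mem_doublyEvenCodes_eq_prod hn (by omega),
    show Fintype.card ι - 2 * (j + 1) = Fintype.card ι - 2 * j - 2 by omega,
    show Fintype.card ι / 2 - (j + 1) = Fintype.card ι / 2 - j - 1 by omega]
  have hwithQ : (#{W ∈ doublyEvenCodes ι j | 1 ∉ W} : ℚ)
      = #{V ∈ doublyEvenCodes ι (j + 1) | 1 ∈ V} * 2 ^ j := by exact_mod_cast hwith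
  rw [Nat.cast_add, mul_add, mul_one_div, mul_div_assoc', ← hwithout,
    mul_div_cancel_right₀ _ (two_pow_sub_one_ne_zero j.succ_ne_zero), hwithQ,
    mul_div_cancel_right₀ _ (pow_ne_zero j two_ne_zero)]

theorem doublyEvenCount_eq_card (N k : ℕ) :
    doublyEvenCount N k = #(doublyEvenCodes (Fin N) k) := by
  rw [doublyEvenCount, ← Nat.card_eq_finsetCard]
  exact Nat.card_congr (Equiv.subtypeEquivRight fun _ => mem_doublyEvenCodes.symm)

end DoublyEven

theorem gaborit_count_four_mod_eight_general (N k : ℕ) (hmod : N % 8 = 4)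
    (hk1 : 1 ≤ k) (hk2 : k ≤ N / 2) :
    (doublyEvenCount N k : ℚ) =
      (∏ i ∈ Finset.range (k - 1),
        ((2 : ℚ) ^ (N - 2 * i - 2) - 2 ^ (N / 2 - i - 1) - 2) / (2 ^ (i + 1) - 1)) *
      (1 / 2 ^ (k - 1) + ((2 : ℚ) ^ (N - 2 * k) - 2 ^ (N / 2 - k) - 2) / (2 ^ k - 1)) := by
  have : Nonempty (Fin N) := ⟨⟨0, by omega⟩⟩
  have h := DoublyEven.card_doublyEvenCodes (ι := Fin N) (by rwa [Fintype.card_fin]) hk1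
    (by rwa [Fintype.card_fin])
  rw [Fintype.card_fin] at h
  rwa [DoublyEven.doublyEvenCount_eq_card]

/-- Gaborit's mass formula for the number of doubly-even `(N,k)` codes when
`N ≡ 4 (mod 8)`, `N ≥ 4`, and `1 ≤ k ≤ N/2`; the empty product (for `k = 1`)
equals `1`. -/
theorem gaborit_count_four_mod_eight (N k : ℕ) (hN : 4 ≤ N) (hmod : N % 8 = 4)
    (hk1 : 1 ≤ k) (hk2 : k ≤ N / 2) :
    (doublyEvenCount N k : ℚ) =
      (∏ i ∈ Finset.range (k - 1),
        ((2 : ℚ) ^ (N - 2 * i - 2) - 2 ^ (N / 2 - i - 1) - 2) / (2 ^ (i + 1) - 1)) *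
      (1 / 2 ^ (k - 1) + ((2 : ℚ) ^ (N - 2 * k) - 2 ^ (N / 2 - k) - 2) / (2 ^ k - 1)) :=
  gaborit_count_four_mod_eight_general N k hmod hk1 hk2
end

section
/- The number of row/column-permutation equivalence classes of unsigned sets of generators {|L_1|, |L_2|} arising from connected sets of generators {L_1, L_2} of GR(2,2) is exactly 1. -/
open Matrix

/-- A signed permutation matrix: exactly one nonzero entry (which is `1` or `-1`)
in each row and in each column. -/
def IsSignedPermMatrix {d : ℕ} (M : Matrix (Fin d) (Fin d) ℤ) : Prop :=
  (∀ j k, M j k = 0 ∨ M j k = 1 ∨ M j k = -1) ∧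
  (∀ j, ∃! k, M j k ≠ 0) ∧ (∀ k, ∃! j, M j k ≠ 0)

/-- A permutation matrix: exactly one nonzero entry (which is `1`)
in each row and in each column. -/
def IsPermMatrix {d : ℕ} (M : Matrix (Fin d) (Fin d) ℤ) : Prop :=
  (∀ j k, M j k = 0 ∨ M j k = 1) ∧
  (∀ j, ∃! k, M j k ≠ 0) ∧ (∀ k, ∃! j, M j k ≠ 0)

/-- `|M|`: entrywise absolute value. -/
def absMat {d : ℕ} (M : Matrix (Fin d) (Fin d) ℤ) : Matrix (Fin d) (Fin d) ℤ :=
  M.map (fun x => |x|)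

/-- A list of generators of the garden algebra `GR(d,N)`. -/
def IsGenList (d N : ℕ) (L : Fin N → Matrix (Fin d) (Fin d) ℤ) : Prop :=
  (∀ i, IsSignedPermMatrix (L i)) ∧
  (∀ i j, L i * (L j)ᵀ + L j * (L i)ᵀ =
      if i = j then (2 : ℤ) • (1 : Matrix (Fin d) (Fin d) ℤ) else 0) ∧
  (∀ i j, (L i)ᵀ * L j + (L j)ᵀ * L i =
      if i = j then (2 : ℤ) • (1 : Matrix (Fin d) (Fin d) ℤ) else 0)

/-- A set of generators of `GR(d,N)`: the underlying set of a list of generators. -/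
def IsGenSet (d N : ℕ) (S : Set (Matrix (Fin d) (Fin d) ℤ)) : Prop :=
  ∃ L : Fin N → Matrix (Fin d) (Fin d) ℤ, IsGenList d N L ∧ S = Set.range L

/-- The bipartite graph on two copies of `Fin d` with an edge between top vertex `j`
and bottom vertex `k` whenever some matrix in `S` has a nonzero `(j,k)` entry. -/
def genGraph {d : ℕ} (S : Set (Matrix (Fin d) (Fin d) ℤ)) : SimpleGraph (Fin d ⊕ Fin d) :=
  SimpleGraph.fromRel (fun a b =>
    ∃ j k, a = Sum.inl j ∧ b = Sum.inr k ∧ ∃ M ∈ S, M j k ≠ 0)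

/-- A connected set of generators of `GR(d,N)`. -/
def ConnectedGenSet (d N : ℕ) (S : Set (Matrix (Fin d) (Fin d) ℤ)) : Prop :=
  IsGenSet d N S ∧ (genGraph S).Connected

/-- Row/column-permutation equivalence of sets of `d × d` matrices. -/
def RCEquiv {d : ℕ} (S S' : Set (Matrix (Fin d) (Fin d) ℤ)) : Prop :=
  ∃ P Q : Matrix (Fin d) (Fin d) ℤ, IsPermMatrix P ∧ IsPermMatrix Q ∧
    S' = (fun M => P * M * Q) '' S

/-- The number of row/column-permutation equivalence classes of connected sets of
generators of `GR(d,N)`. -/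
noncomputable def signedCount (d N : ℕ) : ℕ :=
  Nat.card (Quot (fun S S' : {S : Set (Matrix (Fin d) (Fin d) ℤ) // ConnectedGenSet d N S} =>
    RCEquiv S.1 S'.1))

/-- The number of row/column-permutation equivalence classes of unsigned sets of
generators arising from connected sets of generators of `GR(d,N)`. -/
noncomputable def unsignedCount (d N : ℕ) : ℕ :=
  Nat.card (Quot (fun T T' : {T : Set (Matrix (Fin d) (Fin d) ℤ) //
      ∃ S, ConnectedGenSet d N S ∧ T = absMat '' S} =>
    RCEquiv T.1 T'.1))

/-!
All unsigned sets coming from `GR(2,2)` are equivalent to `{1, swapMatrix}`. For a list of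
generators `(A, B)`, left multiplication by the permutation matrix `|Aᵀ|` sends `|A|` to
`|AᵀA| = 1` and `|B|` to `|AᵀB|`, since taking absolute values entrywise commutes with
multiplication by a signed permutation matrix. The relations make `AᵀB` orthogonal and
antisymmetric, so in dimension `2` it has zero diagonal and `|AᵀB|` is the transposition
matrix. The class is nonempty: `(1, !![0, 1; -1, 0])` is a connected set of generators.
-/

lemma IsSignedPermMatrix.transpose {d : ℕ} {M : Matrix (Fin d) (Fin d) ℤ}
    (hM : IsSignedPermMatrix M) : IsSignedPermMatrix Mᵀ :=
  ⟨fun j k => hM.1 k j, hM.2.2, hM.2.1⟩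

lemma IsSignedPermMatrix.isPermMatrix_absMat {d : ℕ} {M : Matrix (Fin d) (Fin d) ℤ}
    (hM : IsSignedPermMatrix M) : IsPermMatrix (absMat M) := by
  refine ⟨fun j k => ?_, fun j => ?_, fun k => ?_⟩
  · rcases hM.1 j k with h | h | h <;> simp [absMat, h]
  · simpa [absMat] using hM.2.1 j
  · simpa [absMat] using hM.2.2 k

lemma isPermMatrix_one (d : ℕ) : IsPermMatrix (1 : Matrix (Fin d) (Fin d) ℤ) := by
  refine ⟨fun j k => ?_, fun j => ⟨j, by simp, fun k => ?_⟩, fun k => ⟨k, by simp, fun j => ?_⟩⟩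
  · by_cases h : j = k <;> simp [one_apply, h]
  · by_cases h : j = k <;> simp [one_apply, h, eq_comm]
  · by_cases h : j = k <;> simp [one_apply, h]

lemma absMat_one (d : ℕ) : absMat (1 : Matrix (Fin d) (Fin d) ℤ) = 1 := by
  ext j k
  by_cases h : j = k <;> simp [absMat, one_apply, h]

/-- Each row of `A` has a single nonzero entry, so every entry of `A * B` is a single product. -/
lemma IsSignedPermMatrix.absMat_mul {d : ℕ} {A : Matrix (Fin d) (Fin d) ℤ}
    (hA : IsSignedPermMatrix A) (B : Matrix (Fin d) (Fin d) ℤ) :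
    absMat (A * B) = absMat A * absMat B := by
  ext j k
  obtain ⟨l, -, hl⟩ := hA.2.1 j
  have hzero : ∀ m, m ≠ l → A j m = 0 := fun m hm => by_contra fun h => hm (hl m h)
  simp only [absMat, map_apply, mul_apply]
  rw [Finset.sum_eq_single l (fun m _ hm => by simp [hzero m hm]) (by simp),
    Finset.sum_eq_single l (fun m _ hm => by simp [hzero m hm]) (by simp), abs_mul]

namespace IsGenList

variable {d N : ℕ} {L : Fin N → Matrix (Fin d) (Fin d) ℤ}

lemma transpose_mul_self (hL : IsGenList d N L) (i : Fin N) : (L i)ᵀ * L i = 1 := by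
  have h := hL.2.2 i i
  rw [if_pos rfl, ← two_smul ℤ] at h
  exact smul_right_injective _ two_ne_zero h

lemma mul_transpose_self (hL : IsGenList d N L) (i : Fin N) : L i * (L i)ᵀ = 1 := by
  have h := hL.2.1 i i
  rw [if_pos rfl, ← two_smul ℤ] at h
  exact smul_right_injective _ two_ne_zero h

lemma transpose_mul_diag_eq_zero (hL : IsGenList d N L) {i i' : Fin N} (hi : i ≠ i')
    (j : Fin d) : ((L i)ᵀ * L i') j j = 0 := by
  have h := congrFun (congrFun (hL.2.2 i i') j) j
  rw [if_neg hi, Matrix.add_apply, ← transpose_apply ((L i')ᵀ * L i), transpose_mul,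
    transpose_transpose] at h
  simpa using h

end IsGenList

def swapMatrix : Matrix (Fin 2) (Fin 2) ℤ := !![0, 1; 1, 0]

lemma absMat_eq_swapMatrix {C : Matrix (Fin 2) (Fin 2) ℤ} (hC : C * Cᵀ = 1)
    (hdiag : ∀ j, C j j = 0) : absMat C = swapMatrix := by
  have h01 := congrFun (congrFun hC 0) 0
  have h10 := congrFun (congrFun hC 1) 1
  simp only [mul_apply, Fin.sum_univ_two, transpose_apply, hdiag, one_apply_eq,
    mul_zero, zero_add, add_zero] at h01 h10
  ext j k
  fin_cases j <;> fin_cases k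
  · simp [absMat, swapMatrix, hdiag]
  · rcases mul_self_eq_one_iff.mp h01 with h | h <;> simp [absMat, swapMatrix, h]
  · rcases mul_self_eq_one_iff.mp h10 with h | h <;> simp [absMat, swapMatrix, h]
  · simp [absMat, swapMatrix, hdiag]

lemma IsGenList.rcEquiv_absMat_range {L : Fin 2 → Matrix (Fin 2) (Fin 2) ℤ}
    (hL : IsGenList 2 2 L) : RCEquiv (absMat '' Set.range L) {1, swapMatrix} := by
  have hA := (hL.1 0).transpose
  have hC : ((L 0)ᵀ * L 1) * ((L 0)ᵀ * L 1)ᵀ = 1 := by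
    rw [transpose_mul, transpose_transpose, Matrix.mul_assoc, ← Matrix.mul_assoc (L 1),
      hL.mul_transpose_self, Matrix.one_mul, hL.transpose_mul_self]
  have himage : (fun i => absMat (L 0)ᵀ * absMat (L i) * 1) = ![1, swapMatrix] := by
    funext i
    rw [Matrix.mul_one, ← hA.absMat_mul]
    fin_cases i
    · simp [hL.transpose_mul_self, absMat_one]
    · exact absMat_eq_swapMatrix hC (hL.transpose_mul_diag_eq_zero (by decide))
  refine ⟨absMat (L 0)ᵀ, 1, hA.isPermMatrix_absMat, isPermMatrix_one 2, ?_⟩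
  rw [Set.image_image, ← Set.range_comp, ← Matrix.range_cons_cons_empty _ _ ![]]
  exact congrArg Set.range himage.symm

lemma genGraph_connected_of_forall_ne_zero {d : ℕ} [NeZero d]
    {S : Set (Matrix (Fin d) (Fin d) ℤ)} (hS : ∀ j k, ∃ M ∈ S, M j k ≠ 0) :
    (genGraph S).Connected := by
  have hadj : ∀ j k, (genGraph S).Adj (Sum.inl j) (Sum.inr k) := fun j k =>
    (SimpleGraph.fromRel_adj _ _ _).mpr ⟨by simp, Or.inl ⟨j, k, rfl, rfl, hS j k⟩⟩
  have hreach : ∀ v, (genGraph S).Reachable (Sum.inl 0) v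
    | .inl j => (hadj 0 0).reachable.trans (hadj j 0).symm.reachable
    | .inr k => (hadj 0 k).reachable
  exact ⟨fun u v => (hreach u).symm.trans (hreach v)⟩

def stdGenList : Fin 2 → Matrix (Fin 2) (Fin 2) ℤ := ![1, !![0, 1; -1, 0]]

lemma isGenList_stdGenList : IsGenList 2 2 stdGenList := by
  refine ⟨fun i => ?_, fun i j => ?_, fun i j => ?_⟩
  · fin_cases i <;>
      simp [IsSignedPermMatrix, ExistsUnique, Fin.forall_fin_two, Fin.exists_fin_two, stdGenList]
  all_goals fin_cases i <;> fin_cases j <;> decide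

lemma connectedGenSet_stdGenList : ConnectedGenSet 2 2 (Set.range stdGenList) :=
  ⟨⟨stdGenList, isGenList_stdGenList, rfl⟩, genGraph_connected_of_forall_ne_zero <| by
    simpa using (by decide : ∀ j k : Fin 2, ∃ i, stdGenList i j k ≠ 0)⟩

lemma Nat.card_quot_eq_one {α : Type*} {r : α → α → Prop} (a₀ : α) (h : ∀ a, r a a₀) :
    Nat.card (Quot r) = 1 := by
  have hmk : ∀ x : Quot r, x = Quot.mk r a₀ := Quot.ind fun a => Quot.sound (h a)
  exact Nat.card_eq_one_iff_unique.mpr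
    ⟨⟨fun x y => (hmk x).trans (hmk y).symm⟩, ⟨Quot.mk r a₀⟩⟩

/-- There is exactly `1` row/column-permutation equivalence class of unsigned
sets of generators arising from connected sets of generators of `GR(2,2)`. -/
theorem unsigned_count_two_two : unsignedCount 2 2 = 1 := by
  have hstd : absMat '' Set.range stdGenList = {1, swapMatrix} := by
    rw [← Set.range_comp, ← Matrix.range_cons_cons_empty _ _ ![]]
    congr 1
    decide
  refine Nat.card_quot_eq_one ⟨{1, swapMatrix}, _, connectedGenSet_stdGenList, hstd.symm⟩ ?_
  rintro ⟨_, S, ⟨⟨L, hL, rfl⟩, -⟩, rfl⟩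
  exact hL.rcEquiv_absMat_range
end

section
/- If (L_1, …, L_N) is a list of generators of GR(d,N) and i ≠ j, then the permutation matrix P = |L_i|·|L_j|ᵀ is a fixed-point-free involution: P² = I and every diagonal entry of P is 0. (This is the combinatorial content of the 2-colored 4-cycle condition: the edges of any two colors in the associated graph form a disjoint union of 4-cycles.) -/
open Matrix

/-- If `(L_1, …, L_N)` is a list of generators of `GR(d,N)` and `i ≠ j`, then the
permutation matrix `P = |L_i| · |L_j|ᵀ` is a fixed-point-free involution:
`P² = I` and every diagonal entry of `P` is `0`. -/
theorem genList_unsigned_product_involution (d N : ℕ)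
    (L : Fin N → Matrix (Fin d) (Fin d) ℤ) (hL : IsGenList d N L)
    (i j : Fin N) (hij : i ≠ j) :
    (absMat (L i) * (absMat (L j))ᵀ) * (absMat (L i) * (absMat (L j))ᵀ) =
      (1 : Matrix (Fin d) (Fin d) ℤ) ∧
    ∀ m : Fin d, (absMat (L i) * (absMat (L j))ᵀ) m m = 0 := by
  classical
  obtain ⟨hsp, hAC, _⟩ := hL
  obtain ⟨hi1, hi2, hi3⟩ := hsp i
  obtain ⟨hj1, hj2, hj3⟩ := hsp j
  set ri : Fin d → Fin d := fun a => (hi2 a).choose with hri_def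
  set rj : Fin d → Fin d := fun a => (hj2 a).choose with hrj_def
  have hri1 : ∀ a, L i a (ri a) ≠ 0 := fun a => (hi2 a).choose_spec.1
  have hri2 : ∀ a k, L i a k ≠ 0 → k = ri a := fun a k h => (hi2 a).choose_spec.2 k h
  have hrj1 : ∀ a, L j a (rj a) ≠ 0 := fun a => (hj2 a).choose_spec.1
  have hrj2 : ∀ a k, L j a k ≠ 0 → k = rj a := fun a k h => (hj2 a).choose_spec.2 k h
  have hizero : ∀ a k, k ≠ ri a → L i a k = 0 := by
    intro a k hk
    by_contra h
    exact hk (hri2 a k h)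
  have hjzero : ∀ a k, k ≠ rj a → L j a k = 0 := by
    intro a k hk
    by_contra h
    exact hk (hrj2 a k h)
  have habsi : ∀ a, |L i a (ri a)| = 1 := by
    intro a
    rcases hi1 a (ri a) with h | h | h
    · exact absurd h (hri1 a)
    · simp [h]
    · simp [h]
  have habsj : ∀ a, |L j a (rj a)| = 1 := by
    intro a
    rcases hj1 a (rj a) with h | h | h
    · exact absurd h (hrj1 a)
    · simp [h]
    · simp [h]
  have hrii : Function.Injective ri := by
    intro a b h
    have ha := hri1 a
    have hb := hri1 b
    rw [← h] at hb
    obtain ⟨c, _, hc2⟩ := hi3 (ri a)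
    rw [hc2 a ha, hc2 b hb]
  have hrji : Function.Injective rj := by
    intro a b h
    have ha := hrj1 a
    have hb := hrj1 b
    rw [← h] at hb
    obtain ⟨c, _, hc2⟩ := hj3 (rj a)
    rw [hc2 a ha, hc2 b hb]
  have hrjs : Function.Surjective rj := Finite.surjective_of_injective hrji
  -- entry formula for P
  have hP : ∀ a b, (absMat (L i) * (absMat (L j))ᵀ) a b
      = if ri a = rj b then 1 else 0 := by
    intro a b
    rw [Matrix.mul_apply]
    rw [Finset.sum_eq_single (ri a)]
    · simp only [absMat, Matrix.map_apply, Matrix.transpose_apply]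
      rw [habsi, one_mul]
      by_cases h : ri a = rj b
      · rw [if_pos h, h, habsj]
      · rw [if_neg h, hjzero b (ri a) (fun hc => h hc), abs_zero]
    · intro k _ hk
      rw [show (absMat (L i)) a k = 0 by simp [absMat, hizero a k hk]]
      rw [zero_mul]
    · intro h
      exact absurd (Finset.mem_univ _) h
  -- entry formula for M = L i * (L j)ᵀ
  have hM : ∀ a b, (L i * (L j)ᵀ) a b = L i a (ri a) * L j b (ri a) := by
    intro a b
    rw [Matrix.mul_apply]
    rw [Finset.sum_eq_single (ri a)]
    · rfl
    · intro k _ hk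
      rw [hizero a k hk, zero_mul]
    · intro h
      exact absurd (Finset.mem_univ _) h
  -- skew-symmetry
  have hskew : ∀ a b, (L i * (L j)ᵀ) a b = - (L i * (L j)ᵀ) b a := by
    intro a b
    have h0 := hAC i j
    rw [if_neg hij] at h0
    have h1 : (L i * (L j)ᵀ) a b + (L j * (L i)ᵀ) a b = 0 := by
      have := congrFun (congrFun h0 a) b
      simpa using this
    have h2 : (L j * (L i)ᵀ) a b = (L i * (L j)ᵀ) b a := by
      rw [show L j * (L i)ᵀ = (L i * (L j)ᵀ)ᵀ by rw [Matrix.transpose_mul, Matrix.transpose_transpose]]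
      rfl
    rw [h2] at h1
    linarith
  have hMne : ∀ a b, (L i * (L j)ᵀ) a b ≠ 0 ↔ ri a = rj b := by
    intro a b
    rw [hM]
    constructor
    · intro h
      exact hrj2 b (ri a) (fun hc => h (by rw [hc, mul_zero]))
    · intro h
      refine mul_ne_zero (hri1 a) ?_
      rw [h]
      exact hrj1 b
  have hsym : ∀ a b, ri a = rj b ↔ ri b = rj a := by
    intro a b
    rw [← hMne, ← hMne, hskew a b]
    simp
  have hdiag : ∀ m, ri m ≠ rj m := by
    intro m hm
    have h1 := (hMne m m).mpr hm
    have h2 := hskew m m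
    have : (L i * (L j)ᵀ) m m = 0 := by linarith
    exact h1 this
  constructor
  · ext a c
    rw [Matrix.mul_apply]
    simp only [hP]
    obtain ⟨b0, hb0⟩ := hrjs (ri a)
    rw [Finset.sum_eq_single b0]
    · rw [if_pos hb0.symm, one_mul, Matrix.one_apply]
      by_cases h : a = c
      · rw [if_pos h, if_pos]
        rw [hsym b0 c, ← h, hb0]
      · rw [if_neg h, if_neg]
        intro hc
        have h2 : ri c = rj b0 := (hsym b0 c).mp hc
        rw [hb0] at h2
        exact h (hrii h2).symm
    · intro b _ hb
      rw [if_neg, zero_mul]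
      intro hc
      exact hb (hrji (hc.symm.trans hb0.symm))
    · intro h
      exact absurd (Finset.mem_univ _) h
  · intro m
    rw [hP m m, if_neg (hdiag m)]
end
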